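/- arXiv:1311.2751 — 2 statements merged into one kernel-verified Lean document; each statement's English description precedes it below -/
import Mathlib

section
/- Let C be a pre-n-contact distribution on M (an n-codimensional distribution with constant-rank characteristic distribution D). The kernel of the projection θ : 𝔛_C → Γ(TM/C), restricted to multicontact vector fields, equals Γ(D); consequently there is a short exact sequence of Lie algebras 0 → Γ(D) → 𝔛_C → Γ_Ham(N) → 0, where Γ_Ham(N) is the image of θ. In particular, if D = 0 then θ : 𝔛_C → Γ_Ham(N) is a Lie algebra isomorphism. -/
/-!
STATEMENT 4. Algebraic model: `A = C^∞(M)`, vector fields = derivations of `A`,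
`C` = module of sections of the pre-`n`-contact distribution, `θ = Submodule.Quotient.mk`
the projection onto sections of the normal bundle `N = TM/C`.  Multicontact vector
fields: `𝔛_C = {X : ∀ Y ∈ C, ⁅X,Y⁆ ∈ C}`; sections of the characteristic distribution:
`Γ(D) = {Z ∈ C : ∀ Y ∈ C, ⁅Z,Y⁆ ∈ C}`; Hamiltonian sections `Γ_Ham(N) = θ(𝔛_C)`.
Claims: (i) the kernel of `θ` restricted to `𝔛_C` is exactly `Γ(D)` (this gives the
short exact sequence `0 → Γ(D) → 𝔛_C → Γ_Ham(N) → 0`, surjectivity onto the image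
being tautological); (ii) `θ` is compatible with the brackets induced on the image; and
(iii) if `D = 0` then `θ : 𝔛_C → Γ_Ham(N)` is injective, hence a Lie algebra isomorphism
onto `Γ_Ham(N)`.
-/
theorem multicontact_exact_sequence
    {A : Type*} [CommRing A] [Algebra ℝ A]
    (C : Submodule A (Derivation ℝ A A)) :
    -- (i) kernel of θ on 𝔛_C is Γ(D)
    (∀ X : Derivation ℝ A A, (∀ Y ∈ C, ⁅X, Y⁆ ∈ C) →
      ((Submodule.Quotient.mk X : Derivation ℝ A A ⧸ C) = 0 ↔
        (X ∈ C ∧ ∀ Y ∈ C, ⁅X, Y⁆ ∈ C)))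
    ∧
    -- (ii) 𝔛_C is a Lie subalgebra, so θ induces a Lie bracket on Γ_Ham(N)
    (∀ X₁ X₂ : Derivation ℝ A A, (∀ Y ∈ C, ⁅X₁, Y⁆ ∈ C) → (∀ Y ∈ C, ⁅X₂, Y⁆ ∈ C) →
      ∀ Y ∈ C, ⁅⁅X₁, X₂⁆, Y⁆ ∈ C)
    ∧
    -- (iii) if D = 0, θ is injective on 𝔛_C : a Lie algebra isomorphism onto Γ_Ham(N)
    ((∀ Z ∈ C, (∀ Y ∈ C, ⁅Z, Y⁆ ∈ C) → Z = 0) →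
      ∀ X₁ X₂ : Derivation ℝ A A,
        (∀ Y ∈ C, ⁅X₁, Y⁆ ∈ C) → (∀ Y ∈ C, ⁅X₂, Y⁆ ∈ C) →
        (Submodule.Quotient.mk X₁ : Derivation ℝ A A ⧸ C) = Submodule.Quotient.mk X₂ →
        X₁ = X₂) := by
  refine ⟨?_, ?_, ?_⟩
  · intro X hX
    rw [Submodule.Quotient.mk_eq_zero]
    exact ⟨fun h => ⟨h, hX⟩, fun h => h.1⟩
  · intro X₁ X₂ h₁ h₂ Y hY
    have : ⁅⁅X₁, X₂⁆, Y⁆ = ⁅X₁, ⁅X₂, Y⁆⁆ - ⁅X₂, ⁅X₁, Y⁆⁆ := by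
      rw [lie_lie]
    rw [this]
    exact sub_mem (h₁ _ (h₂ _ hY)) (h₂ _ (h₁ _ hY))
  · intro hD X₁ X₂ h₁ h₂ hθ
    have hmem : X₁ - X₂ ∈ C := by
      rwa [Submodule.Quotient.eq] at hθ
    have : X₁ - X₂ = 0 := by
      apply hD _ hmem
      intro Y hY
      rw [sub_lie]
      exact sub_mem (h₁ _ hY) (h₂ _ hY)
    exact sub_eq_zero.mp this
end

section
/- Let ω be an n-plectic form on W (closed (n+1)-form with trivial kernel: i_ξ ω = 0 implies ξ = 0). Suppose Δ is a vector field with L_Δ ω = ω. Then every homogeneous Hamiltonian (n-1)-form μ (i.e. L_Δ μ = μ and i_Y ω = -dμ for the unique Hamiltonian vector field Y) satisfies [Δ, Y] = 0; in particular Y is invariant under the flow of Δ. -/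
/-!
STATEMENT 13. Abstract Cartan calculus: `V` = vector fields (Lie ring), `Om k` =
degree-`k` forms, `d`, `ι`, `L` with Cartan's formula (`hCartan`), `L` commuting with
`d` (`hLd`) and `[L_X, i_Y] = i_{⁅X,Y⁆}` (`hLi`).  `ω : Om (n+2)` represents the closed
`(n+1)`-form, assumed `n`-plectic, i.e. with trivial kernel: `i_ξ ω = 0 → ξ = 0`
(`hnd`).  Given `Δ` with `L_Δ ω = ω`, a homogeneous `(n-1)`-form `μ : Om n`
(`L_Δ μ = μ`) and the (unique) Hamiltonian vector field `Y` with `i_Y ω = -dμ`: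
then `⁅Δ, Y⁆ = 0`, i.e. `Y` is invariant under the flow of `Δ`.
-/
theorem homogeneous_hamiltonian_field_projectable
    {V : Type*} [LieRing V]
    {Om : ℕ → Type*} [∀ k, AddCommGroup (Om k)] [∀ k, Module ℝ (Om k)]
    (d : ∀ k, Om k →ₗ[ℝ] Om (k + 1))
    (ι : ∀ k, V → Om (k + 1) →ₗ[ℝ] Om k)
    (L : ∀ k, V → Om k →ₗ[ℝ] Om k)
    (hCartan : ∀ (X : V) (k : ℕ) (μ : Om (k + 1)),
      L (k + 1) X μ = d k (ι k X μ) + ι (k + 1) X (d (k + 1) μ))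
    (hLd : ∀ (X : V) (k : ℕ) (μ : Om k), L (k + 1) X (d k μ) = d k (L k X μ))
    (hLi : ∀ (X Y : V) (k : ℕ) (μ : Om (k + 1)),
      L k X (ι k Y μ) - ι k Y (L (k + 1) X μ) = ι k ⁅X, Y⁆ μ)
    (n : ℕ) (ω : Om (n + 2)) (hcl : d (n + 2) ω = 0)
    (hnd : ∀ ξ : V, ι (n + 1) ξ ω = 0 → ξ = 0)
    (Δ : V) (hLΔ : L (n + 2) Δ ω = ω)
    (μ : Om n) (hhom : L n Δ μ = μ)
    (Y : V) (hY : ι (n + 1) Y ω = -d n μ) :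
    ⁅Δ, Y⁆ = 0 := by
  apply hnd
  rw [← hLi Δ Y (n + 1) ω, hLΔ, hY, map_neg, hLd, hhom]
  simp
end
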